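/- arXiv:2510.16886 — 3 statements merged into one kernel-verified Lean document; each statement's English description precedes it below -/
import Mathlib

section
/- For x ∈ ℝ and w ∈ ℝ^m, the inequality x ≥ log(∑_{i=1}^m exp(w_i)) holds if and only if there exist r_1,…,r_m ∈ ℝ such that r_i ≥ exp(w_i − x) for all i and ∑_{i=1}^m r_i ≤ 1. -/
open Finset

theorem logSumExp_expCone_representation (m : ℕ) (hm : 1 ≤ m) (x : ℝ) (w : Fin m → ℝ) :
    Real.log (∑ i, Real.exp (w i)) ≤ x ↔
      ∃ r : Fin m → ℝ, (∀ i, Real.exp (w i - x) ≤ r i) ∧ ∑ i, r i ≤ 1 := by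
  have hpos : 0 < ∑ i, Real.exp (w i) := by
    apply Finset.sum_pos (fun i _ => Real.exp_pos _)
    exact Finset.univ_nonempty_iff.mpr (Fin.pos_iff_nonempty.mp hm)
  have key : Real.log (∑ i, Real.exp (w i)) ≤ x ↔ ∑ i, Real.exp (w i - x) ≤ 1 := by
    rw [Real.log_le_iff_le_exp hpos]
    have : ∑ i, Real.exp (w i - x) = (∑ i, Real.exp (w i)) / Real.exp x := by
      rw [Finset.sum_div]
      exact Finset.sum_congr rfl fun i _ => by rw [Real.exp_sub]
    rw [this, div_le_one (Real.exp_pos x)]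
  rw [key]
  constructor
  · intro h
    exact ⟨fun i => Real.exp (w i - x), fun i => le_refl _, h⟩
  · rintro ⟨r, hr, hsum⟩
    exact le_trans (Finset.sum_le_sum fun i _ => hr i) hsum
end

section
/- Suppose V ≥ T[V] componentwise and V_{s̄} > (T[V])_{s̄} for some state s̄. If a state s₀ can reach s̄ in k steps along the directed graph with edges {(s,s') : s' ∈ A(s)}, then the iterates V^{(t)} = T^t[V] satisfy V^{(k)}_{s₀} > V^{(k+1)}_{s₀}. -/
open Finset

/-- The log-sum-exp Bellman operator: states `S`, destination modeled as `none : Option S`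
with value `0`, successor sets `A s ⊆ S ∪ {d}`, utilities `v s s'`. -/
noncomputable def bellman {S : Type*} (A : S → Finset (Option S))
    (v : S → Option S → ℝ) (V : S → ℝ) : S → ℝ :=
  fun s => Real.log (∑ s' ∈ A s, Real.exp (v s s' + s'.elim 0 V))

theorem bellman_slack_propagates_to_origin {S : Type*} [Fintype S]
    (A : S → Finset (Option S)) (hA : ∀ s, (A s).Nonempty)
    (v : S → Option S → ℝ) (V : S → ℝ)
    (h : ∀ s, bellman A v V s ≤ V s)
    (sbar : S) (hslack : bellman A v V sbar < V sbar)
    (s₀ : S) (k : ℕ) (p : ℕ → S)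
    (hp0 : p 0 = s₀) (hpk : p k = sbar)
    (hstep : ∀ i < k, some (p (i + 1)) ∈ A (p i)) :
    (bellman A v)^[k + 1] V s₀ < (bellman A v)^[k] V s₀ := by
  have hposgen : ∀ (W : S → ℝ) (s : S),
      0 < ∑ s' ∈ A s, Real.exp (v s s' + s'.elim 0 W) := by
    intro W s
    exact Finset.sum_pos (fun i _ => Real.exp_pos _) (hA s)
  have mono : ∀ W₁ W₂ : S → ℝ, (∀ s, W₁ s ≤ W₂ s) →
      ∀ s, bellman A v W₁ s ≤ bellman A v W₂ s := by
    intro W₁ W₂ hW s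
    apply Real.log_le_log (hposgen W₁ s)
    refine Finset.sum_le_sum fun i _ => Real.exp_le_exp.2 ?_
    rcases i with _ | a
    · exact le_rfl
    · exact add_le_add le_rfl (hW a)
  have strict : ∀ (W₁ W₂ : S → ℝ), (∀ s, W₁ s ≤ W₂ s) → ∀ (a s : S),
      W₁ a < W₂ a → some a ∈ A s → bellman A v W₁ s < bellman A v W₂ s := by
    intro W₁ W₂ hW a s ha hmem
    apply Real.log_lt_log (hposgen W₁ s)
    refine Finset.sum_lt_sum (fun i _ => Real.exp_le_exp.2 ?_) ⟨some a, hmem, ?_⟩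
    · rcases i with _ | b
      · exact le_rfl
      · exact add_le_add le_rfl (hW b)
    · exact Real.exp_lt_exp.2 (add_lt_add_of_le_of_lt le_rfl ha)
  -- iterates are nonincreasing
  have dec : ∀ (t : ℕ) (s : S),
      (bellman A v)^[t + 1] V s ≤ (bellman A v)^[t] V s := by
    intro t
    induction t with
    | zero => exact h
    | succ n ih =>
      intro s
      conv_lhs => rw [Function.iterate_succ_apply']
      conv_rhs => rw [Function.iterate_succ_apply']
      exact mono _ _ ih s
  -- strict slack propagates along the path
  have key : ∀ i ≤ k, (bellman A v)^[i + 1] V (p (k - i)) <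
      (bellman A v)^[i] V (p (k - i)) := by
    intro i
    induction i with
    | zero => intro _; simpa [hpk] using hslack
    | succ n ih =>
      intro hn
      have hlt : n < k := Nat.lt_of_succ_le hn
      have ih' := ih (le_of_lt hlt)
      have hedge : some (p (k - n)) ∈ A (p (k - (n + 1))) := by
        have h2 : k - (n + 1) + 1 = k - n := by omega
        have := hstep (k - (n + 1)) (by omega)
        rwa [h2] at this
      conv_lhs => rw [Function.iterate_succ_apply']
      conv_rhs => rw [Function.iterate_succ_apply']
      exact strict _ _ (dec n) _ _ ih' hedge
  have := key k le_rfl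
  simpa [hp0] using this
end

section
/- With the same three-state cyclic network and constants b₁, b₂, a₁₀, a₂₀, c₁, c₂ > 0, the inequality system Z_{s₁} ≥ a₁₀ Z_{s₀} + c₁, Z_{s₂} ≥ a₂₀ Z_{s₀} + c₂, Z_{s₀} ≥ b₁ Z_{s₁} + b₂ Z_{s₂} has a solution with all Z > 0 if and only if b₁ a₁₀ + b₂ a₂₀ < 1. -/
theorem three_state_cycle_inequality_feasibility
    (a10 a20 b1 b2 c1 c2 : ℝ)
    (ha10 : 0 < a10) (ha20 : 0 < a20) (hb1 : 0 < b1) (hb2 : 0 < b2)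
    (hc1 : 0 < c1) (hc2 : 0 < c2) :
    (∃ Z0 Z1 Z2 : ℝ, 0 < Z0 ∧ 0 < Z1 ∧ 0 < Z2 ∧
        a10 * Z0 + c1 ≤ Z1 ∧ a20 * Z0 + c2 ≤ Z2 ∧ b1 * Z1 + b2 * Z2 ≤ Z0) ↔
      b1 * a10 + b2 * a20 < 1 := by
  constructor
  · rintro ⟨Z0, Z1, Z2, hZ0, hZ1, hZ2, h1, h2, h0⟩
    nlinarith [mul_le_mul_of_nonneg_left h1 hb1.le,
      mul_le_mul_of_nonneg_left h2 hb2.le]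
  · intro hr
    have hden : 0 < 1 - (b1 * a10 + b2 * a20) := by linarith
    set Z0 : ℝ := (b1 * c1 + b2 * c2) / (1 - (b1 * a10 + b2 * a20)) with hZ0def
    have hZ0 : 0 < Z0 := div_pos (by nlinarith) hden
    refine ⟨Z0, a10 * Z0 + c1, a20 * Z0 + c2, hZ0, by nlinarith, by nlinarith,
      le_refl _, le_refl _, ?_⟩
    have : Z0 * (1 - (b1 * a10 + b2 * a20)) = b1 * c1 + b2 * c2 := by
      rw [hZ0def, div_mul_cancel₀ _ hden.ne']
    nlinarith
end
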